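/- arXiv:1710.07714 — 4 statements merged into one kernel-verified Lean document; each statement's English description precedes it below -/
import Mathlib

section
/- Let g be a finite-dimensional real Lie algebra with inner product and let {X_1, …, X_n} be an orthonormal nice basis, i.e., writing [X_i, X_j] = Σ_k c_{ij}^k X_k, for all i,j there is at most one k with c_{ij}^k ≠ 0, and for all i,k there is at most one j with c_{ij}^k ≠ 0. Then the symmetric operator M defined by ⟨MX, X⟩ = -(1/2) Σ_{i,j} ⟨[X, X_i], X_j⟩² + (1/4) Σ_{i,j} ⟨[X_i, X_j], X⟩² is diagonal in the basis {X_1, …, X_n}, i.e., ⟨M X_i, X_j⟩ = 0 for i ≠ j. -/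
open scoped RealInnerProductSpace

/-- If a finite-dimensional real metric Lie algebra has an orthonormal *nice* basis,
then the operator `M` appearing in the Ricci formula is diagonal in that basis. -/
theorem stmt2 {E : Type*} [NormedAddCommGroup E] [InnerProductSpace ℝ E]
    [FiniteDimensional ℝ E] {n : ℕ}
    (br : E →ₗ[ℝ] E →ₗ[ℝ] E)
    (hskew : ∀ X Y, br X Y = - br Y X)
    (hjac : ∀ X Y Z, br X (br Y Z) + br Y (br Z X) + br Z (br X Y) = 0)
    (b : OrthonormalBasis (Fin n) ℝ E)
    -- structure constants
    (c : Fin n → Fin n → Fin n → ℝ)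
    (hc : ∀ i j k, c i j k = ⟪br (b i) (b j), b k⟫)
    -- the nice basis conditions
    (hnice1 : ∀ i j k k', c i j k ≠ 0 → c i j k' ≠ 0 → k = k')
    (hnice2 : ∀ i k j j', c i j k ≠ 0 → c i j' k ≠ 0 → j = j') :
    -- `M` is diagonal: the polarization of `⟨MX,X⟩` vanishes off the diagonal
    ∀ i j, i ≠ j →
      (-(1/2) * ∑ k, ∑ l, ⟪br (b i) (b k), b l⟫ * ⟪br (b j) (b k), b l⟫
        + (1/4) * ∑ k, ∑ l, ⟪br (b k) (b l), b i⟫ * ⟪br (b k) (b l), b j⟫) = 0 := by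
  intro i j hij
  have hskewc : ∀ a a' k, c a a' k = - c a' a k := by
    intro a a' k
    rw [hc, hc, hskew, inner_neg_left]
  have hsum1 : ∀ k l, ⟪br (b i) (b k), b l⟫ * ⟪br (b j) (b k), b l⟫ = 0 := by
    intro k l
    rw [← hc, ← hc]
    rcases eq_or_ne (c i k l) 0 with h | h
    · rw [h, zero_mul]
    · rcases eq_or_ne (c j k l) 0 with h2 | h2
      · rw [h2, mul_zero]
      · have h' : c k i l ≠ 0 := by rw [hskewc]; simpa using h
        have h2' : c k j l ≠ 0 := by rw [hskewc]; simpa using h2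
        exact absurd (hnice2 k l i j h' h2') hij
  have hsum2 : ∀ k l, ⟪br (b k) (b l), b i⟫ * ⟪br (b k) (b l), b j⟫ = 0 := by
    intro k l
    rw [← hc, ← hc]
    rcases eq_or_ne (c k l i) 0 with h | h
    · rw [h, zero_mul]
    · rcases eq_or_ne (c k l j) 0 with h2 | h2
      · rw [h2, mul_zero]
      · exact absurd (hnice1 k l i j h h2) hij
  simp [hsum1, hsum2]
end

section
/- Let A be a family of commuting normal operators on a finite-dimensional real inner product space n. Then each A ∈ A commutes with the transpose Aʹᵗ of every Aʹ ∈ A, and the symmetric parts S(A) = (A + Aᵗ)/2, A ∈ A, form a commuting family of symmetric operators; consequently there exists an orthogonal decomposition n = n₁ ⊕ … ⊕ n_p and real numbers a_{A,j} such that S(A)|_{n_j} = a_{A,j}·Id_{n_j} for every A ∈ A and every j. -/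
/-!
Finite-dimensional Fuglede theorem: if `A` is normal and `X A = A X`, then `C = X A* - A* X`
satisfies `tr (C* C) = tr (X* (C A - A C))` by cyclicity, and
`C A - A C = X (A* A - A A*) - (A* A - A A*) X = 0`; positivity of `C* C` then forces `C = 0`.
Hence `A, A*, A', A'*` commute pairwise for `A, A' ∈ 𝒜`, so the symmetric parts `(A + A*)/2`
form a commuting family of symmetric operators, and their joint eigenspaces give the orthogonal
decomposition.
-/

open scoped RealInnerProductSpace

theorem exists_fin_injective_iSup_comp_eq {α ι : Type*} [CompleteLattice α] {V : ι → α}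
    (h : {i | V i ≠ ⊥}.Finite) :
    ∃ (p : ℕ) (f : Fin p → ι), Function.Injective f ∧ ⨆ j, V (f j) = ⨆ i, V i := by
  have : Finite {i // V i ≠ ⊥} := h.to_subtype
  let e := (Finite.equivFin {i // V i ≠ ⊥}).symm
  exact ⟨_, Subtype.val ∘ e, Subtype.val_injective.comp e.injective,
    (e.iSup_comp (g := fun i : {i // V i ≠ ⊥} ↦ V i)).trans (iSup_ne_bot_subtype V)⟩

namespace LinearMap

variable {𝕜 E : Type*} [RCLike 𝕜] [NormedAddCommGroup E] [InnerProductSpace 𝕜 E]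
  [FiniteDimensional 𝕜 E]

theorem IsPositive.trace_eq_zero_iff {f : E →ₗ[𝕜] E} (hf : f.IsPositive) :
    f.trace 𝕜 E = 0 ↔ f = 0 := by
  classical
  let b := stdOrthonormalBasis 𝕜 E
  rw [trace_eq_matrix_trace 𝕜 b.toBasis, ((posSemidef_toMatrix_iff b).mpr hf).trace_eq_zero_iff,
    LinearEquiv.map_eq_zero_iff]

theorem eq_zero_of_trace_star_mul_self_eq_zero {C : E →ₗ[𝕜] E}
    (h : (star C * C).trace 𝕜 E = 0) : C = 0 := by
  have h0 : adjoint C ∘ₗ C = 0 := (isPositive_adjoint_comp_self C).trace_eq_zero_iff.mp h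
  rw [← ker_eq_top, ← ker_adjoint_comp_self, h0, ker_zero]

theorem commute_star_right_of_isStarNormal {A X : E →ₗ[𝕜] E} (hA : IsStarNormal A)
    (hXA : Commute X A) : Commute X (star A) := by
  set C := X * star A - star A * X
  have hCA : C * A = A * C := by
    calc C * A = X * (star A * A) - star A * (X * A) := by simp only [C, sub_mul, mul_assoc]
      _ = X * (A * star A) - A * star A * X := by
        rw [hXA.eq, ← mul_assoc (star A), hA.star_comm_self.eq]
      _ = A * C := by simp only [C, mul_sub, ← mul_assoc, hXA.eq]
  have hCC : star C * C = A * (star X * C) - star X * (A * C) := by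
    simp only [C, star_sub, star_mul, star_star, sub_mul, mul_assoc]
  apply sub_eq_zero.mp (eq_zero_of_trace_star_mul_self_eq_zero _)
  rw [hCC, map_sub, trace_mul_comm, mul_assoc, hCA, sub_self]

open Module.End Function in
theorem IsSymmetric.exists_orthogonalFamily_eigenspaces_of_commute {ι : Type*}
    {T : ι → E →ₗ[𝕜] E} (hT : ∀ i, (T i).IsSymmetric) (hC : Pairwise (Commute on T)) :
    ∃ (p : ℕ) (V : Fin p → Submodule 𝕜 E) (a : ι → Fin p → 𝕜),
      OrthogonalFamily 𝕜 (fun j ↦ V j) (fun j ↦ (V j).subtypeₗᵢ) ∧ ⨆ j, V j = ⊤ ∧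
      ∀ i j, ∀ v ∈ V j, T i v = a i j • v := by
  have hV := IsSymmetric.orthogonalFamily_iInf_eigenspaces hT
  obtain ⟨p, f, hf, hsup⟩ :=
    exists_fin_injective_iSup_comp_eq (WellFoundedGT.finite_ne_bot_of_iSupIndep hV.independent)
  refine ⟨p, fun j ↦ ⨅ i, eigenspace (T i) (f j i), fun i j ↦ f j i, hV.comp hf,
    hsup.trans (IsSymmetric.iSup_iInf_eq_top_of_commute hT hC), fun i j v hv ↦ ?_⟩
  exact mem_eigenspace_iff.mp ((Submodule.mem_iInf _).mp hv i)

end LinearMap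

theorem Commute.add_star_self {R : Type*} [Semiring R] [StarRing R] {a b : R}
    (h : Commute a b) (h' : Commute a (star b)) : Commute (a + star a) (b + star b) :=
  (h.add_left h'.star_left).add_right (h'.add_left h.star_star)

/-- A commuting family of normal operators on a finite-dimensional real inner
product space: each member commutes with the adjoints of all members, the
symmetric parts form a commuting family of symmetric operators, and there is an
orthogonal decomposition on whose pieces every symmetric part acts as a scalar. -/
theorem stmt8 {n : Type*} [NormedAddCommGroup n] [InnerProductSpace ℝ n]
    [FiniteDimensional ℝ n]
    (𝒜 : Set (n →ₗ[ℝ] n))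
    (hnormal : ∀ A ∈ 𝒜, A ∘ₗ LinearMap.adjoint A = LinearMap.adjoint A ∘ₗ A)
    (hcomm : ∀ A ∈ 𝒜, ∀ A' ∈ 𝒜, A ∘ₗ A' = A' ∘ₗ A)
    (S : (n →ₗ[ℝ] n) → (n →ₗ[ℝ] n))
    (hS : ∀ A, S A = (1/2 : ℝ) • (A + LinearMap.adjoint A)) :
    (∀ A ∈ 𝒜, ∀ A' ∈ 𝒜, A ∘ₗ LinearMap.adjoint A' = LinearMap.adjoint A' ∘ₗ A) ∧
    (∀ A ∈ 𝒜, (S A).IsSymmetric) ∧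
    (∀ A ∈ 𝒜, ∀ A' ∈ 𝒜, S A ∘ₗ S A' = S A' ∘ₗ S A) ∧
    (∃ (p : ℕ) (𝔫 : Fin p → Submodule ℝ n) (a : (n →ₗ[ℝ] n) → Fin p → ℝ),
      (∀ i j, i ≠ j → ∀ v ∈ 𝔫 i, ∀ w ∈ 𝔫 j, ⟪v, w⟫ = 0) ∧
      (⨆ j, 𝔫 j) = ⊤ ∧
      (∀ A ∈ 𝒜, ∀ j, ∀ v ∈ 𝔫 j, S A v = a A j • v)) := by
  have hstar : ∀ A ∈ 𝒜, ∀ A' ∈ 𝒜, Commute A (star A') := fun A hA A' hA' ↦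
    LinearMap.commute_star_right_of_isStarNormal ⟨(hnormal A' hA').symm⟩ (hcomm A hA A' hA')
  have hsymm : ∀ A, (S A).IsSymmetric := fun A ↦ by
    rw [LinearMap.isSymmetric_iff_isSelfAdjoint, hS]
    exact (IsSelfAdjoint.all _).smul (IsSelfAdjoint.add_star_self A)
  have hScomm : ∀ A ∈ 𝒜, ∀ A' ∈ 𝒜, Commute (S A) (S A') := fun A hA A' hA' ↦ by
    rw [hS, hS]
    have := Commute.add_star_self (hcomm A hA A' hA') (hstar A hA A' hA')
    exact (this.smul_left _).smul_right _
  obtain ⟨p, V, a, hV, htop, heig⟩ :=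
    LinearMap.IsSymmetric.exists_orthogonalFamily_eigenspaces_of_commute
      (T := fun A : 𝒜 ↦ S A) (fun A ↦ hsymm A) (fun A A' _ ↦ hScomm A A.2 A' A'.2)
  classical
  refine ⟨hstar, fun A _ ↦ hsymm A, hScomm, p, V,
    fun A j ↦ if hA : A ∈ 𝒜 then a ⟨A, hA⟩ j else 0,
    fun i j hij v hv w hw ↦ hV hij ⟨v, hv⟩ ⟨w, hw⟩, htop, fun A hA j v hv ↦ ?_⟩
  simpa [hA] using heig ⟨A, hA⟩ j v hv
end

section
/- Let g = a ⊕ n be a metric solvable Lie algebra with a abelian, n the nilradical, the decomposition orthogonal, and suppose ad A|_n is a normal operator on n for every A ∈ a. Then for any A ∈ a and X ∈ n, the Ricci operator satisfies ⟨Ric A, X⟩ = 0, and ⟨Ric A, A⟩ = − tr S(ad A|_n)², where S denotes the symmetric part. In particular Ric preserves the decomposition a ⊕ n. -/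
open scoped RealInnerProductSpace

variable {E : Type*} [NormedAddCommGroup E] [InnerProductSpace ℝ E]
  [FiniteDimensional ℝ E]

/-- Iterated bracket `[v k, [v (k-1), [..., v 0]]]`, used to express nilpotency. -/
def iterBr (br : E →ₗ[ℝ] E →ₗ[ℝ] E) : ℕ → (ℕ → E) → E
  | 0, v => v 0
  | (k+1), v => br (v (k+1)) (iterBr br k v)

/-- The Ricci form `⟨Ric x, y⟩ = ⟨(M - (1/2)B - S(ad H))x, y⟩` of a metric Lie
algebra, relative to an orthonormal basis `b` and mean curvature vector `Hm`. -/
noncomputable def ricForm {N : ℕ} (br : E →ₗ[ℝ] E →ₗ[ℝ] E)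
    (b : OrthonormalBasis (Fin N) ℝ E) (Hm : E) (x y : E) : ℝ :=
  -(1/2) * ∑ i, ∑ j, ⟪br x (b i), b j⟫ * ⟪br y (b i), b j⟫
  + (1/4) * ∑ i, ∑ j, ⟪br (b i) (b j), x⟫ * ⟪br (b i) (b j), y⟫
  - (1/2) * LinearMap.trace ℝ E (br x ∘ₗ br y)
  - (1/2) * (⟪br Hm x, y⟫ + ⟪x, br Hm y⟫)

/-!
Since `a` is abelian and `n` is an ideal, every bracket lies in `n ⊥ a`. So for `A ∈ a` the
`B`-term of `⟨Ric A, y⟩` vanishes, the mean curvature vector lies in `a` (for `X ∈ n`, `ad X` is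
nilpotent, hence traceless) and commutes with `A`, leaving
`⟨Ric A, y⟩ = -½ (tr (ad A)ᵗ ad y + tr ad A ad y)`; moreover `ad A` is `ad A|_n` extended by zero
on `a = nᗮ`. For `X ∈ n` both traces vanish: `ad A` is a derivation, so it preserves the lower
central series of `n`, normality makes `(ad A)ᵗ` preserve it too, and `ad X` shifts it down one
step, so `T ∘ ad X` is nilpotent for every `T` preserving it. For `y = A` the two traces are
those of `ad A|_n` on `n`, and they add up to `2 tr S(ad A|_n)²`.
-/

open scoped InnerProductSpace
open LinearMap (adjoint trace)

namespace LinearMap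

variable {𝕜 F : Type*} [RCLike 𝕜] [NormedAddCommGroup F] [InnerProductSpace 𝕜 F]
  [FiniteDimensional 𝕜 F]

lemma eq_zero_of_trace_adjoint_comp_self_eq_zero {C : F →ₗ[𝕜] F}
    (h : trace 𝕜 F (adjoint C ∘ₗ C) = 0) : C = 0 := by
  let b := stdOrthonormalBasis 𝕜 F
  have hsum : ∑ i, ‖C (b i)‖ ^ 2 = 0 := by
    rw [trace_eq_sum_inner _ b] at h
    simp only [comp_apply, adjoint_inner_right, inner_self_eq_norm_sq_to_K] at h
    exact_mod_cast h
  have hzero : ∀ i, C (b i) = 0 := fun i => by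
    simpa using (Finset.sum_eq_zero_iff_of_nonneg (fun j _ => by positivity)).1 hsum i
      (Finset.mem_univ i)
  exact b.toBasis.ext fun i => by simpa using hzero i

/-- The compression `C = (1 - p) T† p` of `T†` to the orthogonal projection `p` onto `W`
satisfies `tr (C† C) = 0` by normality, so `C = 0`. -/
lemma adjoint_apply_mem_of_comp_adjoint_eq {T : F →ₗ[𝕜] F}
    (hT : T ∘ₗ adjoint T = adjoint T ∘ₗ T) {W : Submodule 𝕜 F} (hW : ∀ x ∈ W, T x ∈ W) :
    ∀ x ∈ W, adjoint T x ∈ W := by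
  set p : F →ₗ[𝕜] F := W.starProjection.toLinearMap
  set T' := adjoint T
  have hp : p * p = p := congrArg ContinuousLinearMap.toLinearMap W.isIdempotentElem_starProjection
  have hp' : adjoint p = p := W.starProjection_isSymmetric.adjoint_eq
  have hpT : p * T * p = T * p := by
    ext x; exact W.starProjection_eq_self_iff.mpr (hW _ (W.starProjection_apply_mem x))
  set C := (1 - p) * T' * p
  have hC : adjoint C = p * T * (1 - p) := by
    simp only [C, Module.End.mul_eq_comp, adjoint_comp, map_sub, adjoint_one, hp', T',
      adjoint_adjoint, comp_assoc]
  have htr : trace 𝕜 F (adjoint C * C) = 0 := by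
    have hCC : adjoint C * C = p * (T * T') * p - T * p * T' * p := by
      calc adjoint C * C = p * T * ((1 - p) * (1 - p)) * T' * p := by
            rw [hC]; simp only [C]; noncomm_ring
        _ = p * (T * T') * p - p * T * p * T' * p := by
          rw [(IsIdempotentElem.one_sub hp).eq]; noncomm_ring
        _ = p * (T * T') * p - T * p * T' * p := by rw [hpT]
    have h1 : trace 𝕜 F (p * (T * T') * p) = trace 𝕜 F (T * p * T') := by
      calc trace 𝕜 F (p * (T * T') * p) = trace 𝕜 F (p * p * (T' * T)) := by
            rw [trace_mul_comm, ← mul_assoc, show T * T' = T' * T from hT]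
        _ = trace 𝕜 F (T' * (T * p)) := by rw [hp, trace_mul_comm, mul_assoc]
        _ = trace 𝕜 F (T * p * T') := trace_mul_comm 𝕜 _ _
    have h2 : trace 𝕜 F (T * p * T' * p) = trace 𝕜 F (T * p * T') := by
      rw [trace_mul_comm, ← mul_assoc, ← mul_assoc, hpT]
    rw [hCC, map_sub, h1, h2, sub_self]
  have hC0 : C = 0 := eq_zero_of_trace_adjoint_comp_self_eq_zero htr
  intro x hx
  have hCx := congrArg (· x) hC0
  simp only [C, Module.End.mul_apply, LinearMap.sub_apply, Module.End.one_apply, p,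
    ContinuousLinearMap.coe_coe, W.starProjection_eq_self_iff.mpr hx, LinearMap.zero_apply,
    sub_eq_zero] at hCx
  rw [hCx]
  exact W.starProjection_apply_mem _

end LinearMap

namespace Submodule

variable {𝕜 F : Type*} [RCLike 𝕜] [NormedAddCommGroup F] [InnerProductSpace 𝕜 F]

lemma eq_orthogonal_of_codisjoint {a n : Submodule 𝕜 F} (hcod : Codisjoint a n)
    (horth : ∀ x ∈ a, ∀ y ∈ n, ⟪x, y⟫_𝕜 = 0) : a = nᗮ := by
  refine le_antisymm (fun x hx => (n.mem_orthogonal' x).2 (horth x hx)) fun x hx => ?_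
  obtain ⟨y, hy, z, hz, rfl⟩ := mem_sup.1 (hcod.eq_top ▸ mem_top : x ∈ a ⊔ n)
  have hz' : z ∈ nᗮ := by
    simpa using nᗮ.sub_mem hx ((n.mem_orthogonal' y).2 (horth y hy))
  rw [disjoint_def.1 n.orthogonal_disjoint z hz hz', add_zero]
  exact hy

variable [FiniteDimensional 𝕜 F] (K : Submodule 𝕜 F)

noncomputable def extendByZero (T : K →ₗ[𝕜] K) : F →ₗ[𝕜] F :=
  K.subtype ∘ₗ T ∘ₗ K.orthogonalProjectionOnto.toLinearMap

lemma orthogonalProjectionOnto_comp_subtype :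
    K.orthogonalProjectionOnto.toLinearMap ∘ₗ K.subtype = LinearMap.id :=
  LinearMap.ext K.orthogonalProjectionOnto_mem_subspace_eq_self

lemma adjoint_subtype : adjoint K.subtype = K.orthogonalProjectionOnto.toLinearMap := by
  symm
  rw [LinearMap.eq_adjoint_iff]
  intro x y
  simp

lemma adjoint_orthogonalProjectionOnto_toLinearMap :
    adjoint K.orthogonalProjectionOnto.toLinearMap = K.subtype := by
  rw [← adjoint_subtype, LinearMap.adjoint_adjoint]

lemma extendByZero_comp (T U : K →ₗ[𝕜] K) :
    K.extendByZero T ∘ₗ K.extendByZero U = K.extendByZero (T ∘ₗ U) := by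
  simp only [extendByZero, LinearMap.comp_assoc]
  rw [← LinearMap.comp_assoc _ K.subtype, orthogonalProjectionOnto_comp_subtype,
    LinearMap.id_comp]

lemma adjoint_extendByZero (T : K →ₗ[𝕜] K) :
    adjoint (K.extendByZero T) = K.extendByZero (adjoint T) := by
  rw [extendByZero, LinearMap.adjoint_comp, LinearMap.adjoint_comp, adjoint_subtype,
    adjoint_orthogonalProjectionOnto_toLinearMap, extendByZero, LinearMap.comp_assoc]

lemma trace_extendByZero (T : K →ₗ[𝕜] K) : trace 𝕜 F (K.extendByZero T) = trace 𝕜 K T := by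
  rw [extendByZero, LinearMap.trace_comp_comm', LinearMap.comp_assoc,
    orthogonalProjectionOnto_comp_subtype, LinearMap.comp_id]

lemma eq_extendByZero {f : F →ₗ[𝕜] F} {T : K →ₗ[𝕜] K} (hf : ∀ y ∈ Kᗮ, f y = 0)
    (hT : ∀ x : K, (T x : F) = f x) : f = K.extendByZero T := by
  ext x
  have hx : f x = f (K.starProjection x) := by
    rw [← sub_eq_zero, ← map_sub, hf _ (K.sub_starProjection_mem_orthogonal x)]
  rw [hx, extendByZero, LinearMap.comp_apply, LinearMap.comp_apply, subtype_apply, hT]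
  rfl

end Submodule

namespace LinearMap

variable {F : Type*} [NormedAddCommGroup F] [InnerProductSpace ℝ F] [FiniteDimensional ℝ F]

lemma trace_adjoint (T : F →ₗ[ℝ] F) : trace ℝ F (adjoint T) = trace ℝ F T := by
  let b := stdOrthonormalBasis ℝ F
  simp only [trace_eq_sum_inner _ b, adjoint_inner_right, real_inner_comm]

lemma trace_symmPart_comp_symmPart (T : F →ₗ[ℝ] F) :
    trace ℝ F (((1/2 : ℝ) • (T + adjoint T)) ∘ₗ ((1/2 : ℝ) • (T + adjoint T))) =
      (1/2) * (trace ℝ F (T ∘ₗ T) + trace ℝ F (adjoint T ∘ₗ T)) := by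
  have hTT : trace ℝ F (adjoint T ∘ₗ adjoint T) = trace ℝ F (T ∘ₗ T) := by
    rw [← adjoint_comp, trace_adjoint]
  have hcomm : trace ℝ F (T ∘ₗ adjoint T) = trace ℝ F (adjoint T ∘ₗ T) := trace_comp_comm' _ _
  simp only [smul_comp, comp_smul, add_comp, comp_add, map_smul, map_add, hTT, hcomm,
    smul_eq_mul]
  ring

lemma sum_inner_mul_inner_eq_trace {ι : Type*} [Fintype ι] (b : OrthonormalBasis ι ℝ F)
    (f g : F →ₗ[ℝ] F) :
    ∑ i, ∑ j, ⟪f (b i), b j⟫ * ⟪g (b i), b j⟫ = trace ℝ F (adjoint f ∘ₗ g) := by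
  rw [trace_eq_sum_inner _ b]
  refine Finset.sum_congr rfl fun i _ => ?_
  rw [comp_apply, adjoint_inner_right, ← b.sum_inner_mul_inner]
  exact Finset.sum_congr rfl fun j _ => by rw [real_inner_comm (b j) (g (b i))]

end LinearMap

section Bracket

lemma br_br_eq_add {R L : Type*} [CommRing R] [AddCommGroup L] [Module R L]
    {br : L →ₗ[R] L →ₗ[R] L} (hskew : ∀ X Y, br X Y = - br Y X)
    (hjac : ∀ X Y Z, br X (br Y Z) + br Y (br Z X) + br Z (br X Y) = 0) (A X Y : L) :
    br A (br X Y) = br (br A X) Y + br X (br A Y) := by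
  have h := hjac A X Y
  rw [hskew Y A, map_neg] at h
  rw [hskew (br A X) Y, ← sub_eq_zero, ← h]
  abel

lemma br_mem_of_codisjoint {R L : Type*} [CommRing R] [AddCommGroup L] [Module R L]
    {br : L →ₗ[R] L →ₗ[R] L} (hskew : ∀ X Y, br X Y = - br Y X) {a n : Submodule R L}
    (hcod : Codisjoint a n) (habel : ∀ x ∈ a, ∀ y ∈ a, br x y = 0)
    (hideal : ∀ x : L, ∀ y ∈ n, br x y ∈ n) (x y : L) : br x y ∈ n := by
  have hsup : ∀ z : L, z ∈ a ⊔ n := fun z => hcod.eq_top ▸ Submodule.mem_top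
  obtain ⟨x₁, hx₁, x₂, hx₂, rfl⟩ := Submodule.mem_sup.1 (hsup x)
  obtain ⟨y₁, hy₁, y₂, hy₂, rfl⟩ := Submodule.mem_sup.1 (hsup y)
  rw [LinearMap.map_add₂, map_add, habel x₁ hx₁ y₁ hy₁, zero_add, hskew x₂]
  exact n.add_mem (hideal x₁ y₂ hy₂) (n.neg_mem (hideal _ x₂ hx₂))

variable {V : Type*} [NormedAddCommGroup V] [InnerProductSpace ℝ V]
  (br : V →ₗ[ℝ] V →ₗ[ℝ] V) (n : Submodule ℝ V)

lemma iterBr_congr {i : ℕ} {v w : ℕ → V} (h : ∀ j ≤ i, v j = w j) :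
    iterBr br i v = iterBr br i w := by
  induction i with
  | zero => exact h 0 le_rfl
  | succ i ih =>
    show br (v (i + 1)) (iterBr br i v) = br (w (i + 1)) (iterBr br i w)
    rw [h (i + 1) le_rfl, ih fun j hj => h j (hj.trans i.le_succ)]

/-- The lower central series of `n`. -/
def brFlag (i : ℕ) : Submodule ℝ V :=
  Submodule.span ℝ {z | ∃ v : ℕ → V, (∀ j, v j ∈ n) ∧ iterBr br i v = z}

lemma brFlag_zero : brFlag br n 0 = n :=
  le_antisymm (Submodule.span_le.2 fun _ ⟨_, hv, hz⟩ => hz ▸ hv 0)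
    fun z hz => Submodule.subset_span ⟨fun _ => z, fun _ => hz, rfl⟩

lemma brFlag_eq_bot {k : ℕ} (hk : ∀ v : ℕ → V, (∀ i, v i ∈ n) → iterBr br k v = 0) :
    brFlag br n k = ⊥ :=
  eq_bot_iff.2 <| Submodule.span_le.2 fun _ ⟨v, hv, hz⟩ => hz ▸ (hk v hv).symm ▸ zero_mem _

lemma br_mem_brFlag_succ {i : ℕ} {X y : V} (hX : X ∈ n) (hy : y ∈ brFlag br n i) :
    br X y ∈ brFlag br n (i + 1) := by
  refine (Submodule.span_le (p := (brFlag br n (i + 1)).comap (br X))).2 ?_ hy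
  rintro _ ⟨v, hv, rfl⟩
  refine Submodule.subset_span ⟨Function.update v (i + 1) X, fun j => ?_, ?_⟩
  · rcases eq_or_ne j (i + 1) with rfl | h
    · rwa [Function.update_self]
    · rw [Function.update_of_ne h]; exact hv j
  · show br (Function.update v (i + 1) X (i + 1)) (iterBr br i (Function.update v (i + 1) X)) = _
    rw [Function.update_self,
      iterBr_congr br fun j hj => Function.update_of_ne (by omega) _ _]

variable {br n}

lemma br_mem_brFlag (hskew : ∀ X Y, br X Y = - br Y X)
    (hjac : ∀ X Y Z, br X (br Y Z) + br Y (br Z X) + br Z (br X Y) = 0)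
    (hideal : ∀ x : V, ∀ y ∈ n, br x y ∈ n) (A : V) :
    ∀ i, ∀ y ∈ brFlag br n i, br A y ∈ brFlag br n i := by
  intro i
  induction i with
  | zero => rw [brFlag_zero]; exact hideal A
  | succ i ih =>
    intro y hy
    refine (Submodule.span_le (p := (brFlag br n (i + 1)).comap (br A))).2 ?_ hy
    rintro _ ⟨v, hv, rfl⟩
    have hw : iterBr br i v ∈ brFlag br n i := Submodule.subset_span ⟨v, hv, rfl⟩
    show br A (br (v (i + 1)) (iterBr br i v)) ∈ brFlag br n (i + 1)
    rw [br_br_eq_add hskew hjac]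
    exact add_mem (br_mem_brFlag_succ br n (hideal A _ (hv _)) hw)
      (br_mem_brFlag_succ br n (hv _) (ih _ hw))

lemma trace_comp_br_eq_zero (hskew : ∀ X Y, br X Y = - br Y X)
    (hideal : ∀ x : V, ∀ y ∈ n, br x y ∈ n)
    (hnilp : ∃ k, ∀ v : ℕ → V, (∀ i, v i ∈ n) → iterBr br k v = 0)
    [FiniteDimensional ℝ V] {T : V →ₗ[ℝ] V}
    (hT : ∀ i, ∀ y ∈ brFlag br n i, T y ∈ brFlag br n i) {X : V} (hX : X ∈ n) :
    trace ℝ V (T ∘ₗ br X) = 0 := by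
  obtain ⟨k, hk⟩ := hnilp
  have hpow : ∀ j x, ((T ∘ₗ br X) ^ (j + 1)) x ∈ brFlag br n j := by
    intro j
    induction j with
    | zero =>
      intro x
      rw [pow_one]
      refine hT 0 _ ?_
      rw [brFlag_zero, hskew]
      exact n.neg_mem (hideal x X hX)
    | succ j ih =>
      intro x
      rw [pow_succ', Module.End.mul_apply]
      exact hT _ _ (br_mem_brFlag_succ br n hX (ih x))
  have hnil : IsNilpotent (T ∘ₗ br X) :=
    ⟨k + 1, LinearMap.ext fun x => by simpa [brFlag_eq_bot br n hk] using hpow k x⟩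
  exact (LinearMap.isNilpotent_trace_of_isNilpotent hnil).eq_zero

end Bracket

lemma ricForm_eq_of_inner_br_eq_zero {N : ℕ} {br : E →ₗ[ℝ] E →ₗ[ℝ] E}
    (b : OrthonormalBasis (Fin N) ℝ E) {Hm x : E} (hx : ∀ u v, ⟪x, br u v⟫ = 0)
    (hHm : br Hm x = 0) (y : E) :
    ricForm br b Hm x y =
      -(1/2) * (trace ℝ E (adjoint (br x) ∘ₗ br y) + trace ℝ E (br x ∘ₗ br y)) := by
  simp only [ricForm, LinearMap.sum_inner_mul_inner_eq_trace, real_inner_comm x, hx, hHm,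
    zero_mul, Finset.sum_const_zero, inner_zero_left]
  ring

theorem stmt11_general {N : ℕ}
    (br : E →ₗ[ℝ] E →ₗ[ℝ] E)
    (hskew : ∀ X Y, br X Y = - br Y X)
    (hjac : ∀ X Y Z, br X (br Y Z) + br Y (br Z X) + br Z (br X Y) = 0)
    (a n : Submodule ℝ E) (hcompl : IsCompl a n)
    (horth : ∀ x ∈ a, ∀ y ∈ n, ⟪x, y⟫ = 0)
    (habel : ∀ x ∈ a, ∀ y ∈ a, br x y = 0)
    (hideal : ∀ x : E, ∀ y ∈ n, br x y ∈ n)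
    (hnilp : ∃ k, ∀ v : ℕ → E, (∀ i, v i ∈ n) → iterBr br k v = 0)
    -- each `ad A|_n` is a normal operator on `n`
    (adn : E → (n →ₗ[ℝ] n))
    (hadn : ∀ A : E, ∀ (x : n), (adn A x : E) = br A x)
    (hnormal : ∀ A ∈ a,
      adn A ∘ₗ LinearMap.adjoint (adn A) = LinearMap.adjoint (adn A) ∘ₗ adn A)
    (b : OrthonormalBasis (Fin N) ℝ E)
    (Hm : E) (hHm : ∀ X : E, ⟪Hm, X⟫ = LinearMap.trace ℝ E (br X)) :
    (∀ A ∈ a, ∀ X ∈ n, ricForm br b Hm A X = 0) ∧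
    (∀ A ∈ a, ricForm br b Hm A A =
      - LinearMap.trace ℝ n
        (((1/2 : ℝ) • (adn A + LinearMap.adjoint (adn A))) ∘ₗ
         ((1/2 : ℝ) • (adn A + LinearMap.adjoint (adn A))))) := by
  have ha : a = nᗮ := Submodule.eq_orthogonal_of_codisjoint hcompl.codisjoint horth
  have hext : ∀ A ∈ a, br A = n.extendByZero (adn A) := fun A hA =>
    n.eq_extendByZero (fun y hy => habel A hA y (ha ▸ hy)) (hadn A)
  have hHm_mem : Hm ∈ a := ha ▸ (n.mem_orthogonal' Hm).2 fun X hX => by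
    rw [hHm, ← LinearMap.id_comp (br X)]
    exact trace_comp_br_eq_zero hskew hideal hnilp (fun _ _ hy => hy) hX
  have hric : ∀ A ∈ a, ∀ y, ricForm br b Hm A y =
      -(1/2) * (trace ℝ E (adjoint (br A) ∘ₗ br y) + trace ℝ E (br A ∘ₗ br y)) :=
    fun A hA => ricForm_eq_of_inner_br_eq_zero b
      (fun u v => horth A hA _ (br_mem_of_codisjoint hskew hcompl.codisjoint habel hideal u v))
      (habel Hm hHm_mem A hA)
  refine ⟨fun A hA X hX => ?_, fun A hA => ?_⟩
  · have hflag := br_mem_brFlag hskew hjac hideal A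
    have hnormalA : br A ∘ₗ adjoint (br A) = adjoint (br A) ∘ₗ br A := by
      rw [hext A hA, n.adjoint_extendByZero, n.extendByZero_comp, n.extendByZero_comp,
        hnormal A hA]
    rw [hric A hA, trace_comp_br_eq_zero hskew hideal hnilp hflag hX,
      trace_comp_br_eq_zero hskew hideal hnilp
        (fun i => LinearMap.adjoint_apply_mem_of_comp_adjoint_eq hnormalA (hflag i)) hX]
    ring
  · rw [hric A hA, hext A hA, n.adjoint_extendByZero, n.extendByZero_comp, n.extendByZero_comp,
      n.trace_extendByZero, n.trace_extendByZero, LinearMap.trace_symmPart_comp_symmPart]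
    ring

/-- For a metric solvable Lie algebra `g = a ⊕ n` (orthogonal, `a` abelian, `n`
the nilradical) on which each `ad A|_n`, `A ∈ a`, is normal:
`⟨Ric A, X⟩ = 0` and `⟨Ric A, A⟩ = -tr S(ad A|_n)²`; in particular the Ricci
operator preserves the decomposition `a ⊕ n`. -/
theorem stmt11 {N : ℕ}
    (br : E →ₗ[ℝ] E →ₗ[ℝ] E)
    (hskew : ∀ X Y, br X Y = - br Y X)
    (hjac : ∀ X Y Z, br X (br Y Z) + br Y (br Z X) + br Z (br X Y) = 0)
    (a n : Submodule ℝ E) (hcompl : IsCompl a n)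
    (horth : ∀ x ∈ a, ∀ y ∈ n, ⟪x, y⟫ = 0)
    (habel : ∀ x ∈ a, ∀ y ∈ a, br x y = 0)
    (hideal : ∀ x : E, ∀ y ∈ n, br x y ∈ n)
    (hnilp : ∃ k, ∀ v : ℕ → E, (∀ i, v i ∈ n) → iterBr br k v = 0)
    (hmax : ∀ m : Submodule ℝ E, (∀ x : E, ∀ y ∈ m, br x y ∈ m) →
      (∃ k, ∀ v : ℕ → E, (∀ i, v i ∈ m) → iterBr br k v = 0) → m ≤ n)
    -- each `ad A|_n` is a normal operator on `n`
    (adn : E → (n →ₗ[ℝ] n))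
    (hadn : ∀ A : E, ∀ (x : n), (adn A x : E) = br A x)
    (hnormal : ∀ A ∈ a,
      adn A ∘ₗ LinearMap.adjoint (adn A) = LinearMap.adjoint (adn A) ∘ₗ adn A)
    (b : OrthonormalBasis (Fin N) ℝ E)
    (Hm : E) (hHm : ∀ X : E, ⟪Hm, X⟫ = LinearMap.trace ℝ E (br X)) :
    (∀ A ∈ a, ∀ X ∈ n, ricForm br b Hm A X = 0) ∧
    (∀ A ∈ a, ricForm br b Hm A A =
      - LinearMap.trace ℝ n
        (((1/2 : ℝ) • (adn A + LinearMap.adjoint (adn A))) ∘ₗ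
         ((1/2 : ℝ) • (adn A + LinearMap.adjoint (adn A))))) :=
  stmt11_general br hskew hjac a n hcompl horth habel hideal hnilp adn hadn hnormal b Hm hHm
end

section
/- Let l_∞ = a ⊕ n be a metric solvable Lie algebra with a abelian, orthogonal decomposition, nilradical n = n_u ⊕ V₁ ⊕ V₂ (orthogonal), and suppose: (i) each A ∈ a acts on n by normal operators; (ii) for X ranging over an orthonormal basis {X_1,…,X_s} of n_u, the only nonzero brackets involving n are [X_k, v] ∈ V₂ for v ∈ V₁, and [a, n] ⊆ n; (iii) the mean curvature vector is H = m·Z with ad Z|_{V₁⊕V₂} = Id, ad Z|_{n_u} = 0, where m = dim(V₁⊕V₂). Then for X, Y ∈ {X_1,…,X_s}: ⟨Ric X, Y⟩ = −(1/2) tr (π(Y)|_{V₁})ᵗ (π(X)|_{V₁}), where π(X)|_{V₁} : V₁ → V₂ denotes the map v ↦ [X, v]. -/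
open scoped RealInnerProductSpace

open LinearMap (adjoint trace)

/-!
Since `n_u` acts on `n` only through the orthogonal projection onto `V₁`, with values in `V₂ ⊆ n`,
Parseval in `n` turns the first sum into the Hilbert–Schmidt pairing of `π(X)|_{V₁}` and
`π(Y)|_{V₁}`, i.e. `tr (π(Y)|_{V₁})ᵗ (π(X)|_{V₁})`. The second sum vanishes because `[n, n] ⊆ V₂`
is orthogonal to `n_u`, and the third because `ad Z` kills `n_u`.
-/

section HilbertSchmidt

variable {E ι : Type*} [NormedAddCommGroup E] [InnerProductSpace ℝ E] [Fintype ι]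

theorem OrthonormalBasis.sum_inner_coe_mul_inner_coe {N : Submodule ℝ E}
    (b : OrthonormalBasis ι ℝ N) {u v : E} (hu : u ∈ N) (hv : v ∈ N) :
    ∑ j, ⟪u, (b j : E)⟫ * ⟪v, (b j : E)⟫ = ⟪u, v⟫ := by
  have h := b.sum_inner_mul_inner ⟨u, hu⟩ ⟨v, hv⟩
  simp only [Submodule.coe_inner] at h
  simpa only [real_inner_comm v] using h

theorem OrthonormalBasis.sum_inner_orthogonalProjectionOnto_eq_trace
    {W : Type*} [NormedAddCommGroup W] [InnerProductSpace ℝ W] [FiniteDimensional ℝ W]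
    {N V : Submodule ℝ E} [FiniteDimensional ℝ V] (hV : V ≤ N) (b : OrthonormalBasis ι ℝ N)
    (F G : V →ₗ[ℝ] W) :
    ∑ i, ⟪F (V.orthogonalProjectionOnto (b i : E)), G (V.orthogonalProjectionOnto (b i : E))⟫ =
      trace ℝ V (adjoint G ∘ₗ F) := by
  have : FiniteDimensional ℝ N := .of_basis b.toBasis
  let P : N →ₗ[ℝ] V := V.orthogonalProjectionOnto.toLinearMap ∘ₗ N.subtype
  let J : V →ₗ[ℝ] N := Submodule.inclusion hV
  have hPJ : P ∘ₗ J = LinearMap.id := by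
    ext v
    simp [P, J, Submodule.orthogonalProjectionOnto_mem_subspace_eq_self]
  calc ∑ i, ⟪F (V.orthogonalProjectionOnto (b i : E)), G (V.orthogonalProjectionOnto (b i : E))⟫
      = ∑ i, ⟪b i, (J ∘ₗ (adjoint G ∘ₗ F) ∘ₗ P) (b i)⟫ := by
        refine Finset.sum_congr rfl fun i _ => ?_
        rw [← LinearMap.adjoint_inner_left G]
        simpa [P, J] using real_inner_comm _ _
    _ = trace ℝ N (J ∘ₗ (adjoint G ∘ₗ F) ∘ₗ P) := (LinearMap.trace_eq_sum_inner _ b).symm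
    _ = trace ℝ V (adjoint G ∘ₗ F) := by
        rw [LinearMap.trace_comp_comm', LinearMap.comp_assoc, hPJ, LinearMap.comp_id]

theorem OrthonormalBasis.sum_sum_inner_mul_inner_eq_trace
    {N V W : Submodule ℝ E} [FiniteDimensional ℝ V] [FiniteDimensional ℝ W]
    (hV : V ≤ N) (hW : W ≤ N) (b : OrthonormalBasis ι ℝ N) {f g : E → E} {F G : V →ₗ[ℝ] W}
    (hf : ∀ y ∈ N, f y = F (V.orthogonalProjectionOnto y))
    (hg : ∀ y ∈ N, g y = G (V.orthogonalProjectionOnto y)) :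
    ∑ i, ∑ j, ⟪f (b i), (b j : E)⟫ * ⟪g (b i), (b j : E)⟫ = trace ℝ V (adjoint G ∘ₗ F) := by
  rw [← b.sum_inner_orthogonalProjectionOnto_eq_trace hV F G]
  refine Finset.sum_congr rfl fun i _ => ?_
  rw [hf _ (b i).2, hg _ (b i).2, Submodule.coe_inner,
    b.sum_inner_coe_mul_inner_coe (hW (F _).2) (hW (G _).2)]

end HilbertSchmidt

theorem Submodule.apply_eq_apply_orthogonalProjectionOnto_of_mem_sup
    {E F : Type*} [NormedAddCommGroup E] [InnerProductSpace ℝ E] [AddCommGroup F] [Module ℝ F]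
    {U V W : Submodule ℝ E} [V.HasOrthogonalProjection] (f : E →ₗ[ℝ] F)
    (hU : ∀ x ∈ U, f x = 0) (hW : ∀ x ∈ W, f x = 0) (hUV : U ⟂ V) (hVW : V ⟂ W)
    {y : E} (hy : y ∈ U ⊔ V ⊔ W) : f y = f (V.orthogonalProjectionOnto y) := by
  obtain ⟨p, hp, w, hw, rfl⟩ := Submodule.mem_sup.1 hy
  obtain ⟨u, hu, v, hv, rfl⟩ := Submodule.mem_sup.1 hp
  have hPu : V.orthogonalProjectionOnto u = 0 :=
    Submodule.orthogonalProjectionOnto_eq_zero_iff.2 (hUV hu)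
  have hPv : V.orthogonalProjectionOnto v = ⟨v, hv⟩ :=
    Submodule.orthogonalProjectionOnto_mem_subspace_eq_self ⟨v, hv⟩
  have hPw : V.orthogonalProjectionOnto w = 0 :=
    Submodule.orthogonalProjectionOnto_eq_zero_iff.2 (hVW.symm hw)
  simp [hPu, hPv, hPw, hU u hu, hW w hw]

theorem bracket_mem_of_mem_sup {E : Type*} [AddCommGroup E] [Module ℝ E]
    {br : E →ₗ[ℝ] E →ₗ[ℝ] E} (hskew : ∀ X Y, br X Y = - br Y X) {nu V₁ V₂ : Submodule ℝ E}
    (hbr1 : ∀ x ∈ nu, ∀ y ∈ nu, br x y = 0)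
    (hbr2 : ∀ x ∈ nu, ∀ v ∈ V₁, br x v ∈ V₂)
    (hbr3 : ∀ x ∈ nu, ∀ w ∈ V₂, br x w = 0)
    (hbr4 : ∀ v ∈ V₁ ⊔ V₂, ∀ w ∈ V₁ ⊔ V₂, br v w = 0)
    {x y : E} (hx : x ∈ nu ⊔ V₁ ⊔ V₂) (hy : y ∈ nu ⊔ V₁ ⊔ V₂) : br x y ∈ V₂ := by
  have hmix : Submodule.map₂ br nu (V₁ ⊔ V₂) ≤ V₂ := by
    rw [Submodule.map₂_sup_right]
    refine sup_le (Submodule.map₂_le.2 hbr2) (Submodule.map₂_le.2 fun x hx w hw => ?_)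
    rw [hbr3 x hx w hw]
    exact V₂.zero_mem
  have hN : Submodule.map₂ br (nu ⊔ (V₁ ⊔ V₂)) (nu ⊔ (V₁ ⊔ V₂)) ≤ V₂ := by
    rw [Submodule.map₂_sup_left, Submodule.map₂_sup_right br nu, Submodule.map₂_sup_right br (V₁ ⊔ V₂)]
    refine sup_le (sup_le ?_ hmix) (sup_le ?_ ?_) <;> refine Submodule.map₂_le.2 fun u hu v hv => ?_
    · rw [hbr1 u hu v hv]; exact V₂.zero_mem
    · rw [hskew]; exact V₂.neg_mem (hmix (Submodule.apply_mem_map₂ br hv hu))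
    · rw [hbr4 u hu v hv]; exact V₂.zero_mem
  rw [sup_assoc] at hx hy
  exact hN (Submodule.apply_mem_map₂ br hx hy)

theorem stmt16_general {E : Type*} [NormedAddCommGroup E] [InnerProductSpace ℝ E]
    [FiniteDimensional ℝ E] {ι : Type*} [Fintype ι] {s : ℕ}
    (br : E →ₗ[ℝ] E →ₗ[ℝ] E)
    (hskew : ∀ X Y, br X Y = - br Y X)
    (nu V₁ V₂ : Submodule ℝ E)
    (N : Submodule ℝ E) (hN : N = nu ⊔ V₁ ⊔ V₂)   -- the nilradical
    (horth1 : ∀ x ∈ nu, ∀ y ∈ V₁, ⟪x, y⟫ = 0)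
    (horth2 : ∀ x ∈ nu, ∀ y ∈ V₂, ⟪x, y⟫ = 0)
    (horth3 : ∀ x ∈ V₁, ∀ y ∈ V₂, ⟪x, y⟫ = 0)
    -- (ii) the only nonzero brackets inside `n` are `[n_u, V₁] ⊆ V₂`
    (hbr1 : ∀ x ∈ nu, ∀ y ∈ nu, br x y = 0)
    (hbr2 : ∀ x ∈ nu, ∀ v ∈ V₁, br x v ∈ V₂)
    (hbr3 : ∀ x ∈ nu, ∀ w ∈ V₂, br x w = 0)
    (hbr4 : ∀ v ∈ V₁ ⊔ V₂, ∀ w ∈ V₁ ⊔ V₂, br v w = 0)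
    -- (iii) the mean curvature vector is `H = m·Z` with `ad Z = Id` on `V₁ ⊕ V₂`,
    --       `ad Z = 0` on `n_u`, `m = dim (V₁ ⊕ V₂)`
    (Z Hm : E) (m : ℕ)
    (hZ2 : ∀ x ∈ nu, br Z x = 0)
    (hHm : Hm = (m : ℝ) • Z)
    -- an orthonormal basis of `n` and the orthonormal basis `{X_1, …, X_s}` of `n_u`
    (bn : OrthonormalBasis ι ℝ N)
    (bx : Fin s → E) (hbxmem : ∀ k, bx k ∈ nu)
    -- the maps `π(X)|_{V₁} : V₁ → V₂`
    (res : E → (V₁ →ₗ[ℝ] V₂)) (hres : ∀ x : E, ∀ v : V₁, (res x v : E) = br x v) :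
    ∀ k l : Fin s,
      (-(1/2) * ∑ i, ∑ j, ⟪br (bx k) (bn i : E), (bn j : E)⟫ * ⟪br (bx l) (bn i : E), (bn j : E)⟫
        + (1/4) * ∑ i, ∑ j, ⟪br (bn i : E) (bn j : E), bx k⟫ * ⟪br (bn i : E) (bn j : E), bx l⟫
        - (1/2) * (⟪br Hm (bx k), bx l⟫ + ⟪bx k, br Hm (bx l)⟫)) =
      -(1/2) * LinearMap.trace ℝ V₁ (LinearMap.adjoint (res (bx l)) ∘ₗ res (bx k)) := by
  intro k l
  subst hN
  have hres_proj : ∀ x ∈ nu, ∀ y ∈ nu ⊔ V₁ ⊔ V₂, br x y = res x (V₁.orthogonalProjectionOnto y) :=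
    fun x hx y hy => by
      rw [hres, Submodule.apply_eq_apply_orthogonalProjectionOnto_of_mem_sup (br x) (hbr1 x hx) (hbr3 x hx)
        (Submodule.isOrtho_iff_inner_eq.2 horth1) (Submodule.isOrtho_iff_inner_eq.2 horth3) hy]
  have hbracket_orth : ∀ i j, ⟪br (bn i : E) (bn j : E), bx k⟫ = 0 := fun i j => by
    rw [real_inner_comm]
    exact horth2 _ (hbxmem k) _ (bracket_mem_of_mem_sup hskew hbr1 hbr2 hbr3 hbr4 (bn i).2 (bn j).2)
  have hHm_nu : ∀ x ∈ nu, br Hm x = 0 := fun x hx => by simp [hHm, hZ2 x hx]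
  rw [bn.sum_sum_inner_mul_inner_eq_trace (le_sup_right.trans le_sup_left) le_sup_right
    (hres_proj _ (hbxmem k)) (hres_proj _ (hbxmem l))]
  simp [hbracket_orth, hHm_nu _ (hbxmem k), hHm_nu _ (hbxmem l)]

/-- For the metric solvable Lie algebra `l_∞ = a ⊕ n`, `n = n_u ⊕ V₁ ⊕ V₂`, with
the stated bracket structure, the Ricci form on the directions `X, Y ∈ n_u` is
`⟨Ric X, Y⟩ = -(1/2) tr((π(Y)|_{V₁})ᵗ (π(X)|_{V₁}))`. -/
theorem stmt16 {E : Type*} [NormedAddCommGroup E] [InnerProductSpace ℝ E]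
    [FiniteDimensional ℝ E] {ι : Type*} [Fintype ι] {s : ℕ}
    (br : E →ₗ[ℝ] E →ₗ[ℝ] E)
    (hskew : ∀ X Y, br X Y = - br Y X)
    (hjac : ∀ X Y Z, br X (br Y Z) + br Y (br Z X) + br Z (br X Y) = 0)
    (a nu V₁ V₂ : Submodule ℝ E)
    (N : Submodule ℝ E) (hN : N = nu ⊔ V₁ ⊔ V₂)   -- the nilradical
    (hcompl : IsCompl a N)
    (horth_aN : ∀ x ∈ a, ∀ y ∈ N, ⟪x, y⟫ = 0)
    (horth1 : ∀ x ∈ nu, ∀ y ∈ V₁, ⟪x, y⟫ = 0)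
    (horth2 : ∀ x ∈ nu, ∀ y ∈ V₂, ⟪x, y⟫ = 0)
    (horth3 : ∀ x ∈ V₁, ∀ y ∈ V₂, ⟪x, y⟫ = 0)
    (habel : ∀ x ∈ a, ∀ y ∈ a, br x y = 0)
    (han : ∀ x ∈ a, ∀ y ∈ N, br x y ∈ N)          -- `[a, n] ⊆ n`
    -- (i) each `A ∈ a` acts on `n` by a normal operator
    (adN : E → (N →ₗ[ℝ] N)) (hadN : ∀ A : E, ∀ x : N, (adN A x : E) = br A x)
    (hnormal : ∀ A ∈ a,
      adN A ∘ₗ LinearMap.adjoint (adN A) = LinearMap.adjoint (adN A) ∘ₗ adN A)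
    -- (ii) the only nonzero brackets inside `n` are `[n_u, V₁] ⊆ V₂`
    (hbr1 : ∀ x ∈ nu, ∀ y ∈ nu, br x y = 0)
    (hbr2 : ∀ x ∈ nu, ∀ v ∈ V₁, br x v ∈ V₂)
    (hbr3 : ∀ x ∈ nu, ∀ w ∈ V₂, br x w = 0)
    (hbr4 : ∀ v ∈ V₁ ⊔ V₂, ∀ w ∈ V₁ ⊔ V₂, br v w = 0)
    -- (iii) the mean curvature vector is `H = m·Z` with `ad Z = Id` on `V₁ ⊕ V₂`,
    --       `ad Z = 0` on `n_u`, `m = dim (V₁ ⊕ V₂)`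
    (Z Hm : E) (m : ℕ) (hm : m = Module.finrank ℝ ↥(V₁ ⊔ V₂))
    (hZ1 : ∀ v ∈ V₁ ⊔ V₂, br Z v = v)
    (hZ2 : ∀ x ∈ nu, br Z x = 0)
    (hHm : Hm = (m : ℝ) • Z)
    (hmean : ∀ W : E, ⟪Hm, W⟫ = LinearMap.trace ℝ E (br W))
    -- an orthonormal basis of `n` and the orthonormal basis `{X_1, …, X_s}` of `n_u`
    (bn : OrthonormalBasis ι ℝ N)
    (bx : Fin s → E) (hbxo : Orthonormal ℝ bx) (hbxmem : ∀ k, bx k ∈ nu)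
    (hbxspan : Submodule.span ℝ (Set.range bx) = nu)
    -- the maps `π(X)|_{V₁} : V₁ → V₂`
    (res : E → (V₁ →ₗ[ℝ] V₂)) (hres : ∀ x : E, ∀ v : V₁, (res x v : E) = br x v) :
    ∀ k l : Fin s,
      (-(1/2) * ∑ i, ∑ j, ⟪br (bx k) (bn i : E), (bn j : E)⟫ * ⟪br (bx l) (bn i : E), (bn j : E)⟫
        + (1/4) * ∑ i, ∑ j, ⟪br (bn i : E) (bn j : E), bx k⟫ * ⟪br (bn i : E) (bn j : E), bx l⟫
        - (1/2) * (⟪br Hm (bx k), bx l⟫ + ⟪bx k, br Hm (bx l)⟫)) =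
      -(1/2) * LinearMap.trace ℝ V₁ (LinearMap.adjoint (res (bx l)) ∘ₗ res (bx k)) :=
  stmt16_general br hskew nu V₁ V₂ N hN horth1 horth2 horth3 hbr1 hbr2 hbr3 hbr4 Z Hm m hZ2 hHm bn
    bx hbxmem res hres
end
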